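/- Let L be a field extension of ℚ of finite odd degree. If u₁, …, u_m ∈ L satisfy u₁² + u₂² + ⋯ + u_m² = 0, then u₁ = u₂ = ⋯ = u_m = 0. In particular, the projective quadric u₁² + ⋯ + u_m² = 0 has no point over any field extension of ℚ of odd degree. -/
import Mathlib

/-- Let `L` be a field extension of `ℚ` of finite odd degree.
If `u₁, …, u_m ∈ L` satisfy `u₁² + ⋯ + u_m² = 0`, then all `uᵢ = 0`. -/
theorem sum_sq_eq_zero_of_odd_degree_ext (L : Type) [Field L] [Algebra ℚ L]
    [FiniteDimensional ℚ L] (hodd : Odd (Module.finrank ℚ L))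
    (m : ℕ) (u : Fin m → L) (h : ∑ i, u i ^ 2 = 0) :
    ∀ i, u i = 0 := by
  classical
  haveI : CharZero L := charZero_of_injective_algebraMap (algebraMap ℚ L).injective
  rename_i inst _
  have e : inst = DivisionRing.toRatAlgebra := Subsingleton.elim _ _
  subst e
  haveI : NumberField L := ⟨⟩
  have hcard := NumberField.InfinitePlace.card_add_two_mul_card_eq_rank L
  have hr : 0 < NumberField.InfinitePlace.nrRealPlaces L := by
    rcases hodd with ⟨k, hk⟩
    rw [hk] at hcard
    omega
  obtain ⟨⟨w, hw⟩⟩ := Fintype.card_pos_iff.mp hr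
  let φ := NumberField.InfinitePlace.embedding_of_isReal hw
  have h' : ∑ i, (φ (u i)) ^ 2 = 0 := by
    simpa using congrArg φ h
  intro i
  have hi : φ (u i) = 0 := by
    have := Finset.sum_eq_zero_iff_of_nonneg (fun j _ => sq_nonneg (φ (u j))) |>.mp h' i
      (Finset.mem_univ i)
    exact pow_eq_zero_iff (n := 2) (by norm_num) |>.mp this
  exact φ.injective (by simpa using hi)
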